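/- arXiv:2212.14841 — 3 statements merged into one kernel-verified Lean document; each statement's English description precedes it below -/
import Mathlib

section
/- For integers m ≥ 0 and n ≥ 1 with n not dividing 2m+1, we have ∑_{j=0}^m ((-4)^j / (2j+1)) * C(m+j, 2j) * ∑_{k=0}^{n-1} ( sin(2kπ/n)^{2j+1} + cos(2kπ/n)^{2j+1} ) = 0. -/
/-!
With `s = sin θ`, `sin ((2m+1)θ) = ∑ⱼ (-4)ʲ (2m+1)/(2j+1) C(m+j, 2j) s^(2j+1)`: both sides satisfy
`f (m+2) + f m = 2 cos 2θ · f (m+1)` with `cos 2θ = 1 - 2s²`. Replacing `θ` by `π/2 - θ` gives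
`cos ((2m+1)θ)` as `(-1)ᵐ` times the same polynomial in `cos θ`. So `2m+1` times the sum over `j`
is `∑ₖ sin ((2m+1)θₖ) + (-1)ᵐ cos ((2m+1)θₖ)` with `θₖ = 2kπ/n`, and both sums vanish because
they are the imaginary and real parts of a geometric sum of the `n`-th root of unity
`exp (2πi(2m+1)/n) ≠ 1`.
-/

open Real Finset

theorem Nat.choose_add_two_add_choose (N k : ℕ) :
    (N + 2).choose (k + 2) + N.choose (k + 2) = 2 * (N + 1).choose (k + 2) + N.choose k := by
  simp only [Nat.choose_succ_succ']
  ring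

-- `(2m+1)/(2j+1) * C(m+j, 2j)`, the coefficient of `(-4)ʲ sin^(2j+1) θ` in `sin ((2m+1)θ)`.
def sinMulCoeff (m j : ℕ) : ℕ := (m + j + 1).choose (2 * j + 1) + (m + j).choose (2 * j + 1)

theorem sinMulCoeff_eq_zero {m j : ℕ} (h : m < j) : sinMulCoeff m j = 0 := by
  simp [sinMulCoeff, Nat.choose_eq_zero_of_lt, show m + j + 1 < 2 * j + 1 by omega,
    show m + j < 2 * j + 1 by omega]

theorem sinMulCoeff_zero_right (m : ℕ) : sinMulCoeff m 0 = 2 * m + 1 := by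
  simp [sinMulCoeff]
  ring

theorem sinMulCoeff_add_two_add_sinMulCoeff (m j : ℕ) :
    sinMulCoeff (m + 2) (j + 1) + sinMulCoeff m (j + 1) =
      2 * sinMulCoeff (m + 1) (j + 1) + sinMulCoeff (m + 1) j := by
  have h₁ := Nat.choose_add_two_add_choose (m + j + 2) (2 * j + 1)
  have h₂ := Nat.choose_add_two_add_choose (m + j + 1) (2 * j + 1)
  unfold sinMulCoeff
  ring_nf at h₁ h₂ ⊢
  omega

theorem two_mul_add_one_mul_sinMulCoeff (m j : ℕ) :
    (2 * j + 1) * sinMulCoeff m j = (2 * m + 1) * (m + j).choose (2 * j) := by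
  rcases lt_or_ge m j with h | h
  · rw [sinMulCoeff_eq_zero h, Nat.choose_eq_zero_of_lt (by omega)]
    simp
  obtain ⟨d, rfl⟩ := Nat.exists_eq_add_of_le h
  have h₁ := Nat.add_one_mul_choose_eq (j + d + j) (2 * j)
  have h₂ := Nat.choose_succ_right_eq (j + d + j) (2 * j)
  rw [show j + d + j - 2 * j = d by omega] at h₂
  simp only [sinMulCoeff]
  linarith

section sinMulPoly

variable {R : Type*} [CommRing R]

def sinMulPoly (m : ℕ) (s : R) : R :=
  ∑ j ∈ range (m + 1), (-4) ^ j * (sinMulCoeff m j : R) * s ^ (2 * j + 1)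

theorem sinMulPoly_eq_sum_range {m N : ℕ} (h : m + 1 ≤ N) (s : R) :
    sinMulPoly m s = ∑ j ∈ range N, (-4) ^ j * (sinMulCoeff m j : R) * s ^ (2 * j + 1) := by
  refine sum_subset (range_subset_range.2 h) fun j _ hj ↦ ?_
  rw [sinMulCoeff_eq_zero (by simpa using hj)]
  simp

theorem sinMulPoly_add_two (m : ℕ) (s : R) :
    sinMulPoly (m + 2) s + sinMulPoly m s = 2 * (1 - 2 * s ^ 2) * sinMulPoly (m + 1) s := by
  have hshift : -4 * s ^ 2 * sinMulPoly (m + 1) s =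
      ∑ j ∈ range (m + 2), (-4) ^ (j + 1) * (sinMulCoeff (m + 1) j : R) * s ^ (2 * (j + 1) + 1) := by
    rw [sinMulPoly, mul_sum]
    exact sum_congr rfl fun j _ ↦ by ring
  rw [show 2 * (1 - 2 * s ^ 2) * sinMulPoly (m + 1) s =
      2 * sinMulPoly (m + 1) s + -4 * s ^ 2 * sinMulPoly (m + 1) s by ring, hshift,
    sinMulPoly_eq_sum_range (m := m + 2) (N := m + 2 + 1) le_rfl,
    sinMulPoly_eq_sum_range (m := m) (N := m + 2 + 1) (by omega),
    sinMulPoly_eq_sum_range (m := m + 1) (N := m + 2 + 1) (by omega)]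
  have hterm : ∀ j ∈ range (m + 2),
      (-4) ^ (j + 1) * (sinMulCoeff (m + 2) (j + 1) : R) * s ^ (2 * (j + 1) + 1) +
        (-4) ^ (j + 1) * (sinMulCoeff m (j + 1) : R) * s ^ (2 * (j + 1) + 1) =
      2 * ((-4) ^ (j + 1) * (sinMulCoeff (m + 1) (j + 1) : R) * s ^ (2 * (j + 1) + 1)) +
        (-4) ^ (j + 1) * (sinMulCoeff (m + 1) j : R) * s ^ (2 * (j + 1) + 1) := fun j _ ↦ by
    have h := congr_arg (Nat.cast (R := R)) (sinMulCoeff_add_two_add_sinMulCoeff m j)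
    push_cast at h
    linear_combination (-4) ^ (j + 1) * s ^ (2 * (j + 1) + 1) * h
  have hsum := sum_congr rfl hterm
  rw [sum_add_distrib, sum_add_distrib, ← mul_sum] at hsum
  simp only [sum_range_succ' _ (m + 2), sinMulCoeff_zero_right]
  push_cast
  linear_combination hsum

end sinMulPoly

theorem sin_two_mul_add_one_mul (m : ℕ) (θ : ℝ) :
    sin ((2 * m + 1) * θ) = sinMulPoly m (sin θ) := by
  induction m using Nat.twoStepInduction with
  | zero => simp [sinMulPoly, sinMulCoeff_zero_right]
  | one =>
    rw [show (2 * ((1 : ℕ) : ℝ) + 1) * θ = 3 * θ by norm_num, sin_three_mul]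
    simp [sinMulPoly, sum_range_succ, sinMulCoeff]
    ring
  | more m ih₀ ih₁ =>
    have h := sin_add_sin ((2 * (m + 2) + 1) * θ) ((2 * m + 1) * θ)
    rw [show ((2 * (m + 2) + 1) * θ + (2 * m + 1) * θ) / 2 = (2 * (m + 1) + 1) * θ by ring,
      show ((2 * (m + 2) + 1) * θ - (2 * m + 1) * θ) / 2 = 2 * θ by ring,
      cos_two_mul_eq_one_sub] at h
    push_cast at ih₁ ⊢
    linear_combination h - ih₀ + 2 * (1 - 2 * sin θ ^ 2) * ih₁ - sinMulPoly_add_two m (sin θ)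

theorem cos_two_mul_add_one_mul (m : ℕ) (θ : ℝ) :
    cos ((2 * m + 1) * θ) = (-1) ^ m * sinMulPoly m (cos θ) := by
  rw [← sin_pi_div_two_sub θ, ← sin_two_mul_add_one_mul,
    show (2 * m + 1) * (π / 2 - θ) = π / 2 - (2 * m + 1) * θ + m * π by ring,
    sin_add_nat_mul_pi, sin_pi_div_two_sub, ← mul_assoc, ← mul_pow]
  simp

theorem sum_range_cexp_eq_zero {n r : ℕ} (h : ¬ n ∣ r) :
    ∑ k ∈ range n, Complex.exp ((r * (2 * k * π / n) : ℝ) * Complex.I) = 0 := by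
  rcases eq_or_ne n 0 with rfl | hn
  · simp
  have hζ := Complex.isPrimitiveRoot_exp n hn
  have hr : Complex.exp (2 * π * Complex.I / n) ^ r ≠ 1 := (hζ.pow_eq_one_iff_dvd r).not.mpr h
  have hpow (k : ℕ) : Complex.exp ((r * (2 * k * π / n) : ℝ) * Complex.I) =
      (Complex.exp (2 * π * Complex.I / n) ^ r) ^ k := by
    rw [← pow_mul, ← Complex.exp_nat_mul]
    push_cast
    ring_nf
  rw [sum_congr rfl fun k _ ↦ hpow k, geom_sum_eq hr, pow_right_comm, hζ.pow_eq_one, one_pow,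
    sub_self, zero_div]

theorem sum_range_cos_mul_eq_zero {n r : ℕ} (h : ¬ n ∣ r) :
    ∑ k ∈ range n, cos (r * (2 * k * π / n)) = 0 := by
  simpa only [Complex.re_sum, Complex.exp_ofReal_mul_I_re, Complex.zero_re] using
    congr_arg Complex.re (sum_range_cexp_eq_zero h)

theorem sum_range_sin_mul_eq_zero {n r : ℕ} (h : ¬ n ∣ r) :
    ∑ k ∈ range n, sin (r * (2 * k * π / n)) = 0 := by
  simpa only [Complex.im_sum, Complex.exp_ofReal_mul_I_im, Complex.zero_im] using
    congr_arg Complex.im (sum_range_cexp_eq_zero h)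

theorem stmt_6_general (m n : ℕ) (hdvd : ¬ n ∣ 2 * m + 1) :
    ∑ j ∈ Finset.range (m + 1), ((-4 : ℝ) ^ j / (2 * j + 1)) * (Nat.choose (m + j) (2 * j)) *
      ∑ k ∈ Finset.range n,
        (Real.sin (2 * k * π / n) ^ (2 * j + 1) + Real.cos (2 * k * π / n) ^ (2 * j + 1))
    = 0 := by
  have hcoeff (j : ℕ) : (-4 : ℝ) ^ j / (2 * j + 1) * (m + j).choose (2 * j) =
      (2 * m + 1 : ℝ)⁻¹ * ((-4) ^ j * sinMulCoeff m j) := by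
    have h := congr_arg (Nat.cast (R := ℝ)) (two_mul_add_one_mul_sinMulCoeff m j)
    push_cast at h
    field_simp
    linear_combination -h
  have hsin := sum_range_sin_mul_eq_zero hdvd
  have hcos := sum_range_cos_mul_eq_zero hdvd
  push_cast at hsin hcos
  calc _ = (2 * m + 1 : ℝ)⁻¹ * ∑ k ∈ range n,
        (sinMulPoly m (sin (2 * k * π / n)) + sinMulPoly m (cos (2 * k * π / n))) := by
        simp only [hcoeff, sinMulPoly, mul_sum, ← sum_add_distrib]
        rw [sum_comm]
        exact sum_congr rfl fun k _ ↦ sum_congr rfl fun j _ ↦ by ring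
    _ = (2 * m + 1 : ℝ)⁻¹ * (∑ k ∈ range n, sin ((2 * m + 1) * (2 * k * π / n)) +
        (-1) ^ m * ∑ k ∈ range n, cos ((2 * m + 1) * (2 * k * π / n))) := by
        simp only [sin_two_mul_add_one_mul, cos_two_mul_add_one_mul, mul_sum, sum_add_distrib,
          ← mul_assoc, ← mul_pow]
        simp
    _ = 0 := by rw [hsin, hcos]; simp

theorem stmt_6 (m n : ℕ) (hn : 1 ≤ n) (hdvd : ¬ n ∣ 2 * m + 1) :
    ∑ j ∈ Finset.range (m + 1), ((-4 : ℝ) ^ j / (2 * j + 1)) * (Nat.choose (m + j) (2 * j)) *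
      ∑ k ∈ Finset.range n,
        (Real.sin (2 * k * π / n) ^ (2 * j + 1) + Real.cos (2 * k * π / n) ^ (2 * j + 1))
    = 0 :=
  stmt_6_general m n hdvd
end

section
/- For every integer m ≥ 0 and real x with -2 < x < 2, ∑_{j=0}^m (-1)^j C(m+j+1, 2j+1) x^{2j+1} = sin(2(m+1)·arcsin(x/2)) / cos(arcsin(x/2)). -/
/-!
With `x = 2 sin θ`, both sides satisfy the recurrence `u (m + 2) = (2 - x²) u (m + 1) - u m`:
on the trigonometric side this is `sin (a + 2θ) + sin (a - 2θ) = 2 cos 2θ sin a` together with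
`2 cos 2θ = 2 - 4 sin² θ`, on the binomial side it is the Pascal-rule identity
`C(n+2, r+2) + C(n, r+2) = 2 C(n+1, r+2) + C(n, r)`. The two initial values agree.
-/

open Real Finset

theorem Nat.choose_add_two_add_choose_s13 (n r : ℕ) :
    (n + 2).choose (r + 2) + n.choose (r + 2) = 2 * (n + 1).choose (r + 2) + n.choose r := by
  rw [Nat.choose_succ_succ (n + 1) (r + 1), Nat.choose_succ_succ n r,
    Nat.choose_succ_succ n (r + 1)]
  ring

noncomputable def chooseTerm (m : ℕ) (x : ℝ) (j : ℕ) : ℝ :=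
  (-1 : ℝ) ^ j * (Nat.choose (m + j + 1) (2 * j + 1)) * x ^ (2 * j + 1)

noncomputable def chooseSum (m : ℕ) (x : ℝ) : ℝ :=
  ∑ j ∈ range (m + 1), chooseTerm m x j

theorem chooseTerm_eq_zero {m j : ℕ} (h : m < j) (x : ℝ) : chooseTerm m x j = 0 := by
  simp [chooseTerm, Nat.choose_eq_zero_of_lt (show m + j + 1 < 2 * j + 1 by omega)]

theorem chooseSum_eq_sum_range {m N : ℕ} (h : m + 1 ≤ N) (x : ℝ) :
    chooseSum m x = ∑ j ∈ range N, chooseTerm m x j :=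
  sum_subset (range_subset_range.2 h) fun j _ hj ↦
    chooseTerm_eq_zero (by simpa using hj) x

theorem chooseTerm_add_two_zero (m : ℕ) (x : ℝ) :
    chooseTerm (m + 2) x 0 + chooseTerm m x 0 = 2 * chooseTerm (m + 1) x 0 := by
  simp only [chooseTerm, mul_zero, zero_add, Nat.choose_one_right]
  push_cast
  ring

theorem chooseTerm_add_two_succ (m : ℕ) (x : ℝ) (j : ℕ) :
    chooseTerm (m + 2) x (j + 1) + chooseTerm m x (j + 1)
      = 2 * chooseTerm (m + 1) x (j + 1) - x ^ 2 * chooseTerm (m + 1) x j := by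
  have h := Nat.choose_add_two_add_choose_s13 (m + j + 2) (2 * j + 1)
  simp only [chooseTerm, show m + 2 + (j + 1) + 1 = m + j + 2 + 2 by omega,
    show m + (j + 1) + 1 = m + j + 2 by omega, show m + 1 + (j + 1) + 1 = m + j + 2 + 1 by omega,
    show m + 1 + j + 1 = m + j + 2 by omega, show 2 * (j + 1) + 1 = 2 * j + 1 + 2 by omega]
  have hR := congrArg (Nat.cast : ℕ → ℝ) h
  push_cast at hR
  linear_combination (-(-1 : ℝ) ^ j * x ^ (2 * j + 3)) * hR

theorem chooseSum_add_two (m : ℕ) (x : ℝ) :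
    chooseSum (m + 2) x = (2 - x ^ 2) * chooseSum (m + 1) x - chooseSum m x := by
  have hsum := sum_congr rfl fun j (_ : j ∈ range (m + 2)) ↦ chooseTerm_add_two_succ m x j
  rw [sum_add_distrib, sum_sub_distrib, ← mul_sum, ← mul_sum] at hsum
  have h₂ : chooseSum (m + 2) x
      = ∑ j ∈ range (m + 2), chooseTerm (m + 2) x (j + 1) + chooseTerm (m + 2) x 0 :=
    sum_range_succ' _ _
  have h₁ : chooseSum (m + 1) x
      = ∑ j ∈ range (m + 2), chooseTerm (m + 1) x (j + 1) + chooseTerm (m + 1) x 0 := by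
    rw [chooseSum_eq_sum_range (by omega : m + 2 ≤ m + 3), sum_range_succ']
  have h₀ : chooseSum m x
      = ∑ j ∈ range (m + 2), chooseTerm m x (j + 1) + chooseTerm m x 0 := by
    rw [chooseSum_eq_sum_range (by omega : m + 1 ≤ m + 3), sum_range_succ']
  have h₁' : ∑ j ∈ range (m + 2), chooseTerm (m + 1) x j = chooseSum (m + 1) x := rfl
  rw [h₁'] at hsum
  linear_combination h₂ + h₀ - 2 * h₁ + hsum + chooseTerm_add_two_zero m x

theorem chooseSum_two_mul_sin_mul_cos (m : ℕ) (θ : ℝ) :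
    chooseSum m (2 * sin θ) * cos θ = sin (2 * (m + 1) * θ) := by
  induction m using Nat.twoStepInduction with
  | zero =>
    simp [chooseSum, chooseTerm, sin_two_mul]
  | one =>
    have h : chooseSum 1 (2 * sin θ) = 2 * (2 * sin θ) - (2 * sin θ) ^ 3 := by
      norm_num [chooseSum, chooseTerm, sum_range_succ, sub_eq_add_neg]
    rw [h, Nat.cast_one, one_add_one_eq_two, mul_assoc, sin_two_mul, sin_two_mul, cos_two_mul',
      cos_sq']
    ring
  | more m ih₀ ih₁ =>
    have hsin : sin (2 * ((m + 2 : ℕ) + 1) * θ) + sin (2 * (m + 1) * θ)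
        = 2 * sin (2 * ((m + 1 : ℕ) + 1) * θ) * cos (2 * θ) := by
      rw [sin_add_sin]
      push_cast
      ring_nf
    rw [cos_two_mul', cos_sq'] at hsin
    rw [chooseSum_add_two]
    linear_combination (2 - 4 * sin θ ^ 2) * ih₁ - ih₀ - hsin

theorem stmt_13 (m : ℕ) (x : ℝ) (hx1 : -2 < x) (hx2 : x < 2) :
    ∑ j ∈ Finset.range (m + 1), (-1 : ℝ) ^ j * (Nat.choose (m + j + 1) (2 * j + 1)) * x ^ (2 * j + 1)
      = Real.sin (2 * (m + 1) * Real.arcsin (x / 2)) / Real.cos (Real.arcsin (x / 2)) := by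
  have hcos : cos (arcsin (x / 2)) ≠ 0 :=
    (cos_pos_of_mem_Ioo ⟨neg_pi_div_two_lt_arcsin.2 (by linarith),
      arcsin_lt_pi_div_two.2 (by linarith)⟩).ne'
  have hx : x = 2 * sin (arcsin (x / 2)) := by
    rw [sin_arcsin (by linarith) (by linarith)]; ring
  rw [eq_div_iff hcos, ← chooseSum_two_mul_sin_mul_cos, ← hx]
  rfl
end

section
/- For integers m ≥ 0 and n ≥ 1 and any real a, ∑_{j=0}^m (-4)^j C(m+j+1, 2j+1) ∑_{k=0}^{n-1} sin(a+2kπ/n) cos(a+2kπ/n)^{2j+1} = ((-1)^m / 2) ∑_{k=0}^{n-1} sin(2(m+1)(a + 2kπ/n)). -/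
/-!
Writing `c = cos x`, the inner polynomial `P m c = ∑ⱼ (-4)^j C(m+j+1, 2j+1) c^(2j+1)` is
`(-1)^m / 2 · U_{2m+1}(c)`, so `sin x · P m (cos x) = (-1)^m / 2 · sin (2(m+1)x)` for every `x`.
Both sides satisfy the recurrence `u (m+2) = -2 cos 2x · u (m+1) - u m`: on the left this is the
second-difference identity `C(p+2, q+2) - 2 C(p+1, q+2) + C(p, q+2) = C(p, q)` for the coefficients,
on the right the product-to-sum formula. Summing the pointwise identity over `k` gives the theorem.
-/

open Real Finset

theorem Nat.choose_add_two_add_choose_s17 (p q : ℕ) :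
    (p + 2).choose (q + 2) + p.choose (q + 2) = 2 * (p + 1).choose (q + 2) + p.choose q := by
  rw [Nat.choose_succ_succ (p + 1) (q + 1), Nat.choose_succ_succ p q,
    Nat.choose_succ_succ p (q + 1)]
  simp only [Nat.succ_eq_add_one, show q + 1 + 1 = q + 2 from rfl]
  omega

section OddSeries

variable {R : Type*} [CommRing R]

variable (R) in
def oddSeriesCoeff (m j : ℕ) : R := (-4) ^ j * (m + j + 1).choose (2 * j + 1)

def oddSeries (m : ℕ) (c : R) : R :=
  ∑ j ∈ range (m + 1), oddSeriesCoeff R m j * c ^ (2 * j + 1)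

theorem oddSeriesCoeff_eq_zero {m j : ℕ} (h : m < j) : oddSeriesCoeff R m j = 0 := by
  simp [oddSeriesCoeff, Nat.choose_eq_zero_of_lt (show m + j + 1 < 2 * j + 1 by omega)]

theorem oddSeriesCoeff_add_two_zero (m : ℕ) :
    oddSeriesCoeff R (m + 2) 0 - 2 * oddSeriesCoeff R (m + 1) 0 + oddSeriesCoeff R m 0 = 0 := by
  simp only [oddSeriesCoeff, pow_zero, one_mul, mul_zero, zero_add, Nat.choose_one_right]
  push_cast
  ring

theorem oddSeriesCoeff_add_two_succ (m j : ℕ) :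
    oddSeriesCoeff R (m + 2) (j + 1) - 2 * oddSeriesCoeff R (m + 1) (j + 1)
      + oddSeriesCoeff R m (j + 1) = -4 * oddSeriesCoeff R (m + 1) j := by
  have h := Nat.choose_add_two_add_choose_s17 (m + j + 2) (2 * j + 1)
  simp only [oddSeriesCoeff]
  rw [show m + 2 + (j + 1) + 1 = m + j + 2 + 2 by omega,
    show m + 1 + (j + 1) + 1 = m + j + 2 + 1 by omega, show m + (j + 1) + 1 = m + j + 2 by omega,
    show m + 1 + j + 1 = m + j + 2 by omega, show 2 * (j + 1) + 1 = 2 * j + 1 + 2 by omega]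
  have h' := congrArg (Nat.cast : ℕ → R) h
  push_cast at h'
  linear_combination (-4 : R) ^ (j + 1) * h'

theorem oddSeries_zero (c : R) : oddSeries 0 c = c := by
  simp [oddSeries, oddSeriesCoeff]

theorem oddSeries_one (c : R) : oddSeries 1 c = 2 * c - 4 * c ^ 3 := by
  simp [oddSeries, oddSeriesCoeff, sum_range_succ, sub_eq_add_neg]

theorem oddSeries_eq_sum_range {m N : ℕ} (h : m + 1 ≤ N) (c : R) :
    oddSeries m c = ∑ j ∈ range N, oddSeriesCoeff R m j * c ^ (2 * j + 1) := by
  refine sum_subset (range_subset_range.2 h) fun j _ hj => ?_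
  rw [oddSeriesCoeff_eq_zero (by simpa using hj), zero_mul]

theorem oddSeries_add_two (m : ℕ) (c : R) :
    oddSeries (m + 2) c = (2 - 4 * c ^ 2) * oddSeries (m + 1) c - oddSeries m c := by
  have second_difference :
      oddSeries (m + 2) c - 2 * oddSeries (m + 1) c + oddSeries m c
        = -4 * c ^ 2 * oddSeries (m + 1) c := by
    rw [oddSeries_eq_sum_range (m := m + 2) (N := m + 3) le_rfl]
    nth_rw 1 [oddSeries_eq_sum_range (m := m + 1) (N := m + 3) (by omega)]
    rw [oddSeries_eq_sum_range (m := m) (N := m + 3) (by omega), mul_sum, ← sum_sub_distrib,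
      ← sum_add_distrib, sum_range_succ', oddSeries, mul_sum]
    calc _ = ∑ j ∈ range (m + 2), (oddSeriesCoeff R (m + 2) (j + 1)
              - 2 * oddSeriesCoeff R (m + 1) (j + 1) + oddSeriesCoeff R m (j + 1))
                * c ^ (2 * (j + 1) + 1)
            + (oddSeriesCoeff R (m + 2) 0 - 2 * oddSeriesCoeff R (m + 1) 0
              + oddSeriesCoeff R m 0) * c := by
          congr 1
          · exact sum_congr rfl fun j _ => by ring
          · ring
      _ = _ := by
          simp only [oddSeriesCoeff_add_two_zero, oddSeriesCoeff_add_two_succ, zero_mul, add_zero]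
          exact sum_congr rfl fun j _ => by ring
  linear_combination second_difference

end OddSeries

theorem sin_mul_oddSeries_cos (m : ℕ) (x : ℝ) :
    sin x * oddSeries m (cos x) = (-1) ^ m / 2 * sin (2 * (m + 1) * x) := by
  induction m using Nat.twoStepInduction with
  | zero =>
    rw [Nat.cast_zero, zero_add, mul_one, oddSeries_zero, sin_two_mul]
    ring
  | one =>
    rw [oddSeries_one, show (2 : ℝ) * ((1 : ℕ) + 1) * x = 2 * (2 * x) by norm_num; ring,
      sin_two_mul, sin_two_mul, cos_two_mul]
    ring
  | more m ih₀ ih₁ =>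
    have product_to_sum := two_mul_sin_mul_cos (2 * (m + 2) * x) (2 * x)
    rw [oddSeries_add_two, mul_sub, ← mul_assoc, mul_comm (sin x), mul_assoc, ih₀, ih₁]
    rw [show 2 * (m + 2) * x - 2 * x = 2 * (m + 1) * x by ring,
      show 2 * (m + 2) * x + 2 * x = 2 * (m + 3) * x by ring, cos_two_mul] at product_to_sum
    push_cast
    rw [show 2 * ((m : ℝ) + 1 + 1) * x = 2 * (m + 2) * x by ring,
      show 2 * ((m : ℝ) + 2 + 1) * x = 2 * (m + 3) * x by ring]
    linear_combination (-1 : ℝ) ^ m / 2 * product_to_sum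

theorem stmt_17_general (m n : ℕ) (a : ℝ) :
    ∑ j ∈ Finset.range (m + 1), (-4 : ℝ) ^ j * (Nat.choose (m + j + 1) (2 * j + 1)) *
      ∑ k ∈ Finset.range n, Real.sin (a + 2 * k * π / n) * Real.cos (a + 2 * k * π / n) ^ (2 * j + 1)
    = (-1 : ℝ) ^ m / 2 * ∑ k ∈ Finset.range n, Real.sin (2 * (m + 1) * (a + 2 * k * π / n)) := by
  simp_rw [mul_sum]
  rw [sum_comm]
  refine sum_congr rfl fun k _ => ?_
  rw [← sin_mul_oddSeries_cos, oddSeries, mul_sum]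
  exact sum_congr rfl fun j _ => by rw [oddSeriesCoeff]; ring

theorem stmt_17 (m n : ℕ) (hn : 1 ≤ n) (a : ℝ) :
    ∑ j ∈ Finset.range (m + 1), (-4 : ℝ) ^ j * (Nat.choose (m + j + 1) (2 * j + 1)) *
      ∑ k ∈ Finset.range n, Real.sin (a + 2 * k * π / n) * Real.cos (a + 2 * k * π / n) ^ (2 * j + 1)
    = (-1 : ℝ) ^ m / 2 * ∑ k ∈ Finset.range n, Real.sin (2 * (m + 1) * (a + 2 * k * π / n)) :=
  stmt_17_general m n a
end
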